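/- Let a = 1, so that g₀¹(y) = y − y²/2 and g₁¹(y) = 1/2 + y²/2, and let r : [0,1]² → ℝ satisfy the cumulative functional equation for parameter a = 1 together with r(x,1) = 1 for all x. Then r(0, g_{ω_n}¹ ∘ ⋯ ∘ g_{ω_1}¹(1)) = 1 for every n ≥ 1 and every word (ω₁,…,ω_n) ∈ {0,1}ⁿ. -/
import Mathlib


open Set MeasureTheory

/-- Left branch of the anti-symmetric cusp map:
`f₀ᵃ(x) = ((a+1)/(2a))·(1 - √(1 - 8ax/(a+1)²))` on `[0,1/2]`. -/
noncomputable def f0a (a x : ℝ) : ℝ :=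
  ((a + 1) / (2 * a)) * (1 - Real.sqrt (1 - 8 * a * x / (a + 1) ^ 2))

/-- Right branch of the anti-symmetric cusp map: `f₁ᵃ(x) = 1 - f₀ᵃ(1-x)` on `[1/2,1]`. -/
noncomputable def f1a (a x : ℝ) : ℝ := 1 - f0a a (1 - x)

/-- Inverse of the left branch: `g₀ᵃ(x) = ((1+a)/2)x - (a/2)x²`. -/
noncomputable def g0a (a x : ℝ) : ℝ := ((1 + a) / 2) * x - (a / 2) * x ^ 2

/-- Inverse of the right branch: `g₁ᵃ(x) = 1/2 + ((1-a)/2)x + (a/2)x²`. -/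
noncomputable def g1a (a x : ℝ) : ℝ := 1 / 2 + ((1 - a) / 2) * x + (a / 2) * x ^ 2

/-- `r : [0,1]² → ℝ` satisfies the *cumulative functional equation* for parameter `a`:
`r(x,y) = ((1+a)/2 - ax)·r(g₀ᵃ(x), f₀ᵃ(y))` for `x ∈ [0,1]`, `y ∈ [0,1/2]`, and
`r(x,y) = (1+a)/2 - ax + ((1-a)/2 + ax)·r(g₁ᵃ(x), f₁ᵃ(y))` for `x ∈ [0,1]`, `y ∈ [1/2,1]`. -/
def CumulativeFE (a : ℝ) (r : ℝ → ℝ → ℝ) : Prop :=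
  (∀ x ∈ Set.Icc (0:ℝ) 1, ∀ y ∈ Set.Icc (0:ℝ) (1/2),
    r x y = ((1 + a) / 2 - a * x) * r (g0a a x) (f0a a y)) ∧
  (∀ x ∈ Set.Icc (0:ℝ) 1, ∀ y ∈ Set.Icc (1/2:ℝ) 1,
    r x y = (1 + a) / 2 - a * x + ((1 - a) / 2 + a * x) * r (g1a a x) (f1a a y))

/-- Applies the inverse branches `g₀¹` (for `false`) and `g₁¹` (for `true`)
successively to `1`, following the word `w = (ω₁, …, ω_n)` (so `ω₁` acts first):
the result is `g_{ω_n}¹ ∘ ⋯ ∘ g_{ω_1}¹(1)`. -/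
noncomputable def branchWordOne (w : List Bool) : ℝ :=
  w.foldl (fun y b => if b then g1a 1 y else g0a 1 y) 1

lemma g0a_one (y : ℝ) : g0a 1 y = y - y ^ 2 / 2 := by simp [g0a]; ring

lemma g1a_one (y : ℝ) : g1a 1 y = 1 / 2 + y ^ 2 / 2 := by simp [g1a]; ring

lemma f0a_g0a_one {y : ℝ} (hy : y ∈ Set.Icc (0:ℝ) 1) : f0a 1 (g0a 1 y) = y := by
  obtain ⟨h0, h1⟩ := hy
  have : (1 : ℝ) - 8 * 1 * g0a 1 y / (1 + 1) ^ 2 = (1 - y) ^ 2 := by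
    rw [g0a_one]; ring
  rw [f0a, this, Real.sqrt_sq (by linarith)]
  ring

lemma g0a_mem {y : ℝ} (hy : y ∈ Set.Icc (0:ℝ) 1) : g0a 1 y ∈ Set.Icc (0:ℝ) (1/2) := by
  obtain ⟨h0, h1⟩ := hy
  rw [g0a_one]
  constructor <;> nlinarith

lemma g1a_mem {y : ℝ} (hy : y ∈ Set.Icc (0:ℝ) 1) : g1a 1 y ∈ Set.Icc (1/2:ℝ) 1 := by
  obtain ⟨h0, h1⟩ := hy
  rw [g1a_one]
  constructor <;> nlinarith
/-- At the intermittent parameter `a = 1` (where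
`g₀¹(y) = y - y²/2` and `g₁¹(y) = 1/2 + y²/2`), any solution of the cumulative
functional equation with `r(x,1) = 1` satisfies
`r(0, g_{ω_n}¹ ∘ ⋯ ∘ g_{ω_1}¹(1)) = 1` for every nonempty word. -/
theorem cumulative_at_zero_intermittent
    (r : ℝ → ℝ → ℝ) (hr : CumulativeFE 1 r) (hr1 : ∀ x, r x 1 = 1) :
    ∀ w : List Bool, w ≠ [] → r 0 (branchWordOne w) = 1 := by
  have hright : ∀ y ∈ Set.Icc (1/2:ℝ) 1, r 0 y = 1 := by
    intro y hy
    have := hr.2 0 (by norm_num) y hy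
    simpa using this
  have hleft : ∀ y ∈ Set.Icc (0:ℝ) (1/2), r 0 y = r 0 (f0a 1 y) := by
    intro y hy
    have := hr.1 0 (by norm_num) y hy
    have hg : g0a 1 0 = 0 := by simp [g0a]
    rw [hg] at this
    simpa using this
  have key : ∀ w : List Bool, branchWordOne w ∈ Set.Icc (0:ℝ) 1 ∧ r 0 (branchWordOne w) = 1 := by
    intro w
    induction w using List.reverseRecOn with
    | nil =>
        have h1 : branchWordOne [] = 1 := by simp [branchWordOne]
        rw [h1]
        exact ⟨⟨by norm_num, le_refl 1⟩, hr1 0⟩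
    | append_singleton l b ih =>
      obtain ⟨hmem, hval⟩ := ih
      have hfold : branchWordOne (l ++ [b]) =
          (if b then g1a 1 (branchWordOne l) else g0a 1 (branchWordOne l)) := by
        simp [branchWordOne, List.foldl_append]
      cases b with
      | false =>
        norm_num at hfold
        have hm := g0a_mem hmem
        refine ⟨hfold ▸ ⟨hm.1, by linarith [hm.2]⟩, ?_⟩
        rw [hfold, hleft _ hm, f0a_g0a_one hmem, hval]
      | true =>
        norm_num at hfold
        have hm := g1a_mem hmem
        refine ⟨hfold ▸ ⟨by linarith [hm.1], hm.2⟩, ?_⟩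
        rw [hfold, hright _ hm]
  intro w _
  exact (key w).2
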